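/- Let G be a finite group, N a finite group, f : G → Aut(N) a homomorphism, and g : G → N a bijective crossed homomorphism with respect to f. Then the set {ρ(g(σ)) ∘ f(σ) : σ ∈ G} is a subgroup of Perm(N) acting regularly on N and is isomorphic to G, where ρ(η)(x) = xη⁻¹. -/

import Mathlib

/-! The map `φ : σ ↦ ρ(g σ) ∘ f σ` is a homomorphism `G → Perm N` precisely because `g` is a crossed
homomorphism. Evaluated at `1 : N` it gives `σ ↦ (g σ)⁻¹`, and evaluated at `x = (g σ₁)⁻¹` it gives
`σ ↦ (g (σ * σ₁))⁻¹`. So injectivity of `g` makes the homomorphism injective, and bijectivity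
of `g` makes every orbit map `σ ↦ φ σ x` bijective, i.e. the image acts regularly. -/

open Function

theorem MonoidHom.existsUnique_mem_range_apply_eq {G α : Type*} [Group G]
    (φ : G →* Equiv.Perm α) (hφ : ∀ x, Bijective fun σ => φ σ x) (x y : α) :
    ∃! π : Equiv.Perm α, π ∈ φ.range ∧ π x = y := by
  obtain ⟨σ, hσ⟩ := (hφ x).2 y
  refine ⟨φ σ, ⟨⟨σ, rfl⟩, hσ⟩, ?_⟩
  rintro _ ⟨⟨τ, rfl⟩, hτ⟩
  exact congrArg φ ((hφ x).1 (hτ.trans hσ.symm))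

namespace CrossedHom

variable {G N : Type*} [Group G] [Group N] {f : G →* MulAut N} {g : G → N}

theorem map_one (hg : ∀ σ τ : G, g (σ * τ) = g σ * f σ (g τ)) : g 1 = 1 := by
  simpa using hg 1 1

/-- The permutation representation `σ ↦ ρ(g σ) ∘ f σ`, with `ρ(η) x = x * η⁻¹`. -/
def toPerm (hg : ∀ σ τ : G, g (σ * τ) = g σ * f σ (g τ)) : G →* Equiv.Perm N where
  toFun σ := Equiv.mulRight (g σ)⁻¹ * (f σ : Equiv.Perm N)
  map_one' := by
    ext x
    simp [map_one hg]
  map_mul' σ τ := by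
    ext x
    simp [hg, mul_assoc]

variable (hg : ∀ σ τ : G, g (σ * τ) = g σ * f σ (g τ))

theorem toPerm_apply (σ : G) (x : N) : toPerm hg σ x = f σ x * (g σ)⁻¹ := rfl

theorem toPerm_apply_one (σ : G) : toPerm hg σ 1 = (g σ)⁻¹ := by
  simp [toPerm_apply]

theorem toPerm_injective (hinj : Injective g) : Injective (toPerm hg) := fun σ τ h =>
  hinj <| inv_injective <| by rw [← toPerm_apply_one hg, ← toPerm_apply_one hg, h]

theorem bijective_toPerm_apply (hbij : Bijective g) (x : N) :
    Bijective fun σ => toPerm hg σ x := by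
  obtain ⟨σ₁, hσ₁⟩ := hbij.2 x⁻¹
  have hx : toPerm hg σ₁ 1 = x := by rw [toPerm_apply_one, hσ₁, inv_inv]
  have horbit : (fun σ => toPerm hg σ x) = fun σ => (g (σ * σ₁))⁻¹ := by
    funext σ
    rw [← hx, ← Equiv.Perm.mul_apply, ← map_mul, toPerm_apply_one]
  rw [horbit]
  exact inv_involutive.bijective.comp (hbij.comp (Group.mulRight_bijective σ₁))

end CrossedHom

theorem regular_subgroup_from_bijective_crossed_hom_general
    {G N : Type*} [Group G] [Group N]
    (f : G →* MulAut N) (g : G → N) (hbij : Function.Bijective g)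
    (hg : ∀ σ τ : G, g (σ * τ) = g σ * f σ (g τ)) :
    ∃ S : Subgroup (Equiv.Perm N),
      (S : Set (Equiv.Perm N)) =
        Set.range (fun σ : G =>
          (Equiv.mulRight (g σ)⁻¹ : Equiv.Perm N) * (f σ : Equiv.Perm N)) ∧
      (∀ x y : N, ∃! π : Equiv.Perm N, π ∈ S ∧ π x = y) ∧
      Nonempty (G ≃* S) :=
  ⟨(CrossedHom.toPerm hg).range, MonoidHom.coe_range _,
    (CrossedHom.toPerm hg).existsUnique_mem_range_apply_eq
      (CrossedHom.bijective_toPerm_apply hg hbij),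
    ⟨MonoidHom.ofInjective (CrossedHom.toPerm_injective hg hbij.1)⟩⟩

theorem regular_subgroup_from_bijective_crossed_hom
    {G N : Type*} [Group G] [Group N] [Finite G] [Finite N]
    (f : G →* MulAut N) (g : G → N) (hbij : Function.Bijective g)
    (hg : ∀ σ τ : G, g (σ * τ) = g σ * f σ (g τ)) :
    ∃ S : Subgroup (Equiv.Perm N),
      (S : Set (Equiv.Perm N)) =
        Set.range (fun σ : G =>
          (Equiv.mulRight (g σ)⁻¹ : Equiv.Perm N) * (f σ : Equiv.Perm N)) ∧
      (∀ x y : N, ∃! π : Equiv.Perm N, π ∈ S ∧ π x = y) ∧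
      Nonempty (G ≃* S) :=
  regular_subgroup_from_bijective_crossed_hom_general f g hbij hg
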